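/- With respect to the embedding 𝔰𝔩(n+1) ↪ 𝔰𝔬(n+1,n+1), A ↦ block-diag(A,-Aᵀ), and the trace form B̃(X,Y) = tr(XY) on 𝔰𝔬(n+1,n+1), the orthogonal complement 𝔤^⊥ of the image 𝔤 of 𝔰𝔩(n+1) is the space of block matrices [[λI, S],[T, -λI]] with λ ∈ ℝ and S,T skew-symmetric; in particular 𝔰𝔬(n+1,n+1) = 𝔤 ⊕ 𝔤^⊥ as vector spaces. -/

import Mathlib

/-!
Write `X ∈ 𝔰𝔬(n+1,n+1)` in blocks: the condition `Xᵀh + hX = 0` says exactly that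
`X = [[P, Q], [R, -Pᵀ]]` with `Q`, `R` skew-symmetric. Against `block-diag(A, -Aᵀ)` the trace
form of such an `X` is `2 tr(PA)`, so `X ⊥ 𝔤` iff `P` is trace-orthogonal to `𝔰𝔩(n+1)`, i.e. `P`
is scalar. Splitting `P` into its traceless part and `(tr P / (n+1)) I` gives `𝔤 + 𝔤^⊥`, and a
traceless scalar matrix vanishes, so the sum is direct.
-/

open Matrix

/-- The bilinear form h = [[0,I],[I,0]]. -/
def hmat (n : ℕ) : Matrix (Fin (n+1) ⊕ Fin (n+1)) (Fin (n+1) ⊕ Fin (n+1)) ℝ :=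
  Matrix.fromBlocks 0 1 1 0

namespace Matrix

variable {m n R : Type*} [Fintype m] [Fintype n]

theorem trace_fromBlocks [AddCommMonoid R] (A : Matrix m m R) (B : Matrix m n R)
    (C : Matrix n m R) (D : Matrix n n R) :
    trace (fromBlocks A B C D) = trace A + trace D := by
  simp [trace, Fintype.sum_sum_type]

theorem eq_smul_one_of_trace_mul_eq_zero [DecidableEq n] [Ring R] {P : Matrix n n R} (i₀ : n)
    (h : ∀ A : Matrix n n R, trace A = 0 → trace (P * A) = 0) : P = P i₀ i₀ • 1 := by
  ext i j
  rcases eq_or_ne i j with rfl | hij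
  · have := h (single i i 1 - single i₀ i₀ 1) (by simp)
    simpa [mul_sub, trace_mul_single, sub_eq_zero] using this
  · simpa [trace_mul_single, hij] using h (single j i 1) (trace_single_eq_of_ne _ _ _ hij.symm)

theorem trace_sub_trace_div_card_smul_one [DecidableEq n] [Nonempty n] [Field R] [CharZero R]
    (P : Matrix n n R) : trace (P - (trace P / Fintype.card n) • 1) = 0 := by
  simp [trace_sub, trace_smul, trace_one]

theorem eq_zero_of_trace_smul_one_eq_zero [DecidableEq n] [Nonempty n] [Ring R] [NoZeroDivisors R]
    [CharZero R] {c : R} (h : trace (c • 1 : Matrix n n R) = 0) : c = 0 := by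
  simpa [trace_smul, trace_one] using h

theorem exists_fromBlocks_of_transpose_mul_add_mul_eq_zero [DecidableEq m] [Ring R]
    {X : Matrix (m ⊕ m) (m ⊕ m) R} (hX : Xᵀ * fromBlocks 0 1 1 0 + fromBlocks 0 1 1 0 * X = 0) :
    ∃ P Q S : Matrix m m R, Qᵀ = -Q ∧ Sᵀ = -S ∧ X = fromBlocks P Q S (-Pᵀ) := by
  rw [← fromBlocks_toBlocks X] at hX ⊢
  simp only [fromBlocks_transpose, fromBlocks_multiply, fromBlocks_add, ← fromBlocks_zero,
    fromBlocks_inj, Matrix.mul_zero, Matrix.mul_one, Matrix.zero_mul, Matrix.one_mul, zero_add,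
    add_zero] at hX
  obtain ⟨h₁, h₂, -, h₄⟩ := hX
  refine ⟨X.toBlocks₁₁, _, _, eq_neg_of_add_eq_zero_left h₄, eq_neg_of_add_eq_zero_left h₁, ?_⟩
  rw [eq_neg_of_add_eq_zero_right h₂]

theorem trace_fromBlocks_mul_fromBlocks_neg_transpose [CommRing R] (P Q S A : Matrix m m R) :
    trace (fromBlocks P Q S (-Pᵀ) * fromBlocks A 0 0 (-Aᵀ)) = 2 * trace (P * A) := by
  have : trace (Pᵀ * Aᵀ) = trace (P * A) := by
    rw [← transpose_mul, trace_transpose, trace_mul_comm]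
  simp [fromBlocks_multiply, trace_fromBlocks, this, two_mul]

end Matrix

/-- With respect to the trace form on so(n+1,n+1), the orthogonal complement of the
embedded copy of sl(n+1) (via A ↦ block-diag(A,-A^T)) consists of the block matrices
[[λI,S],[T,-λI]] with S,T skew-symmetric; and so(n+1,n+1) = g ⊕ g^⊥ as vector spaces. -/
theorem stmt_11 (n : ℕ) :
    (∀ X : Matrix (Fin (n+1) ⊕ Fin (n+1)) (Fin (n+1) ⊕ Fin (n+1)) ℝ,
      Xᵀ * hmat n + hmat n * X = 0 →
      ((∀ A : Matrix (Fin (n+1)) (Fin (n+1)) ℝ, Matrix.trace A = 0 →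
          Matrix.trace (X * Matrix.fromBlocks A 0 0 (-Aᵀ)) = 0) ↔
        ∃ (lam : ℝ) (S T : Matrix (Fin (n+1)) (Fin (n+1)) ℝ),
          Sᵀ = -S ∧ Tᵀ = -T ∧
          X = Matrix.fromBlocks (lam • 1) S T (-(lam • (1 : Matrix (Fin (n+1)) (Fin (n+1)) ℝ))))) ∧
    (∀ X : Matrix (Fin (n+1) ⊕ Fin (n+1)) (Fin (n+1) ⊕ Fin (n+1)) ℝ,
      Xᵀ * hmat n + hmat n * X = 0 →
      ∃ (A : Matrix (Fin (n+1)) (Fin (n+1)) ℝ) (lam : ℝ)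
        (S T : Matrix (Fin (n+1)) (Fin (n+1)) ℝ),
        Matrix.trace A = 0 ∧ Sᵀ = -S ∧ Tᵀ = -T ∧
        X = Matrix.fromBlocks A 0 0 (-Aᵀ)
          + Matrix.fromBlocks (lam • 1) S T (-(lam • 1))) ∧
    (∀ (A : Matrix (Fin (n+1)) (Fin (n+1)) ℝ) (lam : ℝ)
        (S T : Matrix (Fin (n+1)) (Fin (n+1)) ℝ),
      Matrix.trace A = 0 → Sᵀ = -S → Tᵀ = -T →
      Matrix.fromBlocks A 0 0 (-Aᵀ) = Matrix.fromBlocks (lam • 1) S T (-(lam • 1)) →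
      Matrix.fromBlocks A 0 0 (-Aᵀ)
        = (0 : Matrix (Fin (n+1) ⊕ Fin (n+1)) (Fin (n+1) ⊕ Fin (n+1)) ℝ)) := by
  refine ⟨fun X hX => ?_, fun X hX => ?_, fun A lam S T hA _ _ heq => ?_⟩
  · obtain ⟨P, Q, R, hQ, hR, rfl⟩ := exists_fromBlocks_of_transpose_mul_add_mul_eq_zero hX
    simp only [trace_fromBlocks_mul_fromBlocks_neg_transpose, mul_eq_zero, two_ne_zero, false_or]
    constructor
    · intro horth
      have hP := eq_smul_one_of_trace_mul_eq_zero 0 horth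
      exact ⟨P 0 0, Q, R, hQ, hR, by rw [hP]; simp⟩
    · rintro ⟨lam, S, T, -, -, hX⟩
      obtain ⟨rfl, -, -, -⟩ := fromBlocks_inj.1 hX
      intro A hA
      simp [hA]
  · obtain ⟨P, Q, R, hQ, hR, rfl⟩ := exists_fromBlocks_of_transpose_mul_add_mul_eq_zero hX
    set lam := trace P / Fintype.card (Fin (n+1))
    refine ⟨P - lam • 1, lam, Q, R, trace_sub_trace_div_card_smul_one P, hQ, hR, ?_⟩
    simp only [transpose_sub, transpose_smul, transpose_one, neg_sub, fromBlocks_add,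
      sub_add_cancel, zero_add, fromBlocks_inj, true_and]
    abel
  · obtain ⟨rfl, -, -, -⟩ := fromBlocks_inj.1 heq
    simp [eq_zero_of_trace_smul_one_eq_zero hA]
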